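/- Suppose finite-support random variables U, Z with conditional probability matrix P of full row rank d_u (completeness), suppose W ⟂ Z | U, and let g, g' be two functions of W. Then E[g(W) | Z=z] = E[g'(W) | Z=z] for all z if and only if E[g(W) | U=u] = E[g'(W) | U=u] for almost all u. -/

import Mathlib

open Finset MeasureTheory

open scoped Classical

/-- Probability of an event on a finite outcome space with mass function `p`. -/
noncomputable def pr {Ω : Type*} [Fintype Ω] (p : Ω → ℝ) (E : Ω → Prop) : ℝ :=
  ∑ ω, if E ω then p ω else 0

/-- Conditional expectation `E[f | E]` on a finite outcome space. -/
noncomputable def cexp {Ω : Type*} [Fintype Ω] (p : Ω → ℝ) (f : Ω → ℝ) (E : Ω → Prop) : ℝ :=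
  (∑ ω, if E ω then p ω * f ω else 0) / pr p E

/-- Conditional probability `P(E | F)` on a finite outcome space. -/
noncomputable def cprob {Ω : Type*} [Fintype Ω] (p : Ω → ℝ) (E F : Ω → Prop) : ℝ :=
  pr p (fun ω => E ω ∧ F ω) / pr p F

/-- Expectation on a finite outcome space. -/
noncomputable def pexp {Ω : Type*} [Fintype Ω] (p : Ω → ℝ) (f : Ω → ℝ) : ℝ :=
  ∑ ω, p ω * f ω

/-- `S` is conditionally independent of `T` given `C`:  for every pair of (bounded) test
functions `F, G` and every value `c` of `C` with positive probability, the conditional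
expectation of the product factorizes. -/
def CondIndep {Ω α β γ : Type*} [Fintype Ω] (p : Ω → ℝ)
    (S : Ω → α) (T : Ω → β) (C : Ω → γ) : Prop :=
  ∀ (F : α → ℝ) (G : β → ℝ) (c : γ), pr p (fun ω => C ω = c) ≠ 0 →
    cexp p (fun ω => F (S ω) * G (T ω)) (fun ω => C ω = c) =
      cexp p (fun ω => F (S ω)) (fun ω => C ω = c) *
        cexp p (fun ω => G (T ω)) (fun ω => C ω = c)

section auxLemmas
variable {Ω : Type*} [Fintype Ω]

lemma cexp_sub' (p : Ω → ℝ) (f f' : Ω → ℝ) (E : Ω → Prop) :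
    cexp p (fun ω => f ω - f' ω) E = cexp p f E - cexp p f' E := by
  unfold cexp
  rw [← sub_div, ← Finset.sum_sub_distrib]
  congr 1
  apply Finset.sum_congr rfl
  intro ω _
  by_cases h : E ω <;> simp [h, mul_sub]

lemma pr_pos_elim (p : Ω → ℝ) (E : Ω → Prop)
    (h : pr p E ≠ 0) : ∃ ω, E ω ∧ p ω ≠ 0 := by
  by_contra hc
  push_neg at hc
  apply h
  apply Finset.sum_eq_zero
  intro ω _
  by_cases hE : E ω
  · simp [hE, hc ω hE]
  · simp [hE]

lemma p_zero_of_pr_zero (p : Ω → ℝ) (hp : ∀ ω, 0 ≤ p ω) (E : Ω → Prop)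
    (h : pr p E = 0) : ∀ ω, E ω → p ω = 0 := by
  intro ω hE
  have h2 := (Finset.sum_eq_zero_iff_of_nonneg ?_).mp h ω (Finset.mem_univ ω)
  · simpa [hE] using h2
  · intro x _; by_cases hx : E x <;> simp [hx, hp x]

lemma pr_ne_zero_of_p_ne_zero (p : Ω → ℝ) (hp : ∀ ω, 0 ≤ p ω) (E : Ω → Prop)
    (ω : Ω) (hE : E ω) (hω : p ω ≠ 0) : pr p E ≠ 0 := by
  intro h
  exact hω (p_zero_of_pr_zero p hp E h ω hE)

lemma tower {𝒰 𝒵 𝒲 : Type*} [Fintype 𝒰]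
    (p : Ω → ℝ) (hp : ∀ ω, 0 ≤ p ω)
    (U : Ω → 𝒰) (Z : Ω → 𝒵) (W : Ω → 𝒲)
    (hCI : CondIndep p Z W U) (f : 𝒲 → ℝ) (ν : 𝒰 → ℝ)
    (hν : ∀ u, pr p (fun ω => U ω = u) ≠ 0 →
      ν u = cexp p (fun ω => f (W ω)) (fun ω => U ω = u)) (z : 𝒵) :
    ∑ ω, (if Z ω = z then p ω * f (W ω) else 0)
      = ∑ ω, (if Z ω = z then p ω * ν (U ω) else 0) := by
  have key : ∀ h : Ω → ℝ, ∑ ω, h ω = ∑ u, ∑ ω, if U ω = u then h ω else 0 := by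
    intro h
    rw [Finset.sum_comm]
    apply Finset.sum_congr rfl
    intro ω _
    simp
  rw [key (fun ω => if Z ω = z then p ω * f (W ω) else 0),
      key (fun ω => if Z ω = z then p ω * ν (U ω) else 0)]
  apply Finset.sum_congr rfl
  intro u _
  by_cases hu : pr p (fun ω => U ω = u) = 0
  · have hz := p_zero_of_pr_zero p hp _ hu
    trans (0:ℝ)
    · apply Finset.sum_eq_zero; intro ω _
      by_cases h1 : U ω = u
      · simp [h1, hz ω h1]
      · simp [h1]
    · symm; apply Finset.sum_eq_zero; intro ω _
      by_cases h1 : U ω = u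
      · simp [h1, hz ω h1]
      · simp [h1]
  · have hCI' := hCI (fun z' => if z' = z then 1 else 0) f u hu
    rw [← hν u hu] at hCI'
    unfold cexp at hCI'
    have h1 : (∑ ω, if U ω = u then p ω * ((if Z ω = z then (1:ℝ) else 0) * f (W ω)) else 0)
        = (∑ ω, if U ω = u then p ω * (if Z ω = z then (1:ℝ) else 0) else 0) * ν u := by
      field_simp at hCI'
      simp only [ite_mul, one_mul, zero_mul, mul_ite, mul_one, mul_zero]
      simpa only [ite_mul, one_mul, zero_mul, mul_ite, mul_one, mul_zero] using hCI'
    calc (∑ ω, if U ω = u then (if Z ω = z then p ω * f (W ω) else 0) else 0)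
        = ∑ ω, if U ω = u then p ω * ((if Z ω = z then (1:ℝ) else 0) * f (W ω)) else 0 := by
          apply Finset.sum_congr rfl; intro ω _
          by_cases h1 : U ω = u <;> by_cases h2 : Z ω = z <;> simp [h1, h2]
      _ = (∑ ω, if U ω = u then p ω * (if Z ω = z then (1:ℝ) else 0) else 0) * ν u := h1
      _ = ∑ ω, (if U ω = u then p ω * (if Z ω = z then (1:ℝ) else 0) else 0) * ν u := by
          rw [Finset.sum_mul]
      _ = ∑ ω, if U ω = u then (if Z ω = z then p ω * ν (U ω) else 0) else 0 := by
          apply Finset.sum_congr rfl; intro ω _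
          by_cases h1 : U ω = u <;> by_cases h2 : Z ω = z <;> simp [h1, h2]

end auxLemmas

/-- key lemma for proximal identification in the discrete case:
completeness of `U` given `Z` together with `W ⟂ Z | U` makes equality of the
`Z`-conditional means of `g(W)` and `g'(W)` equivalent to equality of their
`U`-conditional means. -/
theorem stmt_17 {Ω 𝒰 𝒵 𝒲 : Type*} [Fintype Ω] [Fintype 𝒰] [Fintype 𝒵]
    (p : Ω → ℝ) (hp : ∀ ω, 0 ≤ p ω) (hsum : ∑ ω, p ω = 1)
    (U : Ω → 𝒰) (Z : Ω → 𝒵) (W : Ω → 𝒲)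
    (hcomplete : ∀ ν : 𝒰 → ℝ,
      (∀ z, pr p (fun ω => Z ω = z) ≠ 0 →
        cexp p (fun ω => ν (U ω)) (fun ω => Z ω = z) = 0) →
      ∀ ω, p ω ≠ 0 → ν (U ω) = 0)
    (hCI : CondIndep p Z W U)
    (g g' : 𝒲 → ℝ) :
    ((∀ z, pr p (fun ω => Z ω = z) ≠ 0 →
        cexp p (fun ω => g (W ω)) (fun ω => Z ω = z) =
          cexp p (fun ω => g' (W ω)) (fun ω => Z ω = z)) ↔
      (∀ u, pr p (fun ω => U ω = u) ≠ 0 →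
        cexp p (fun ω => g (W ω)) (fun ω => U ω = u) =
          cexp p (fun ω => g' (W ω)) (fun ω => U ω = u))) := by
  set f : 𝒲 → ℝ := fun w => g w - g' w with hf
  have hfW : ∀ E : Ω → Prop, cexp p (fun ω => f (W ω)) E =
      cexp p (fun ω => g (W ω)) E - cexp p (fun ω => g' (W ω)) E := by
    intro E
    exact cexp_sub' p (fun ω => g (W ω)) (fun ω => g' (W ω)) E
  set ν : 𝒰 → ℝ := fun u =>
    if pr p (fun ω => U ω = u) = 0 then 0
    else cexp p (fun ω => f (W ω)) (fun ω => U ω = u) with hνdef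
  have hν : ∀ u, pr p (fun ω => U ω = u) ≠ 0 →
      ν u = cexp p (fun ω => f (W ω)) (fun ω => U ω = u) := by
    intro u hu
    simp [hνdef, hu]
  have htow := tower p hp U Z W hCI f ν hν
  constructor
  · intro hZ u hu
    have hzero : ∀ z, pr p (fun ω => Z ω = z) ≠ 0 →
        cexp p (fun ω => ν (U ω)) (fun ω => Z ω = z) = 0 := by
      intro z hz
      have h0 : cexp p (fun ω => f (W ω)) (fun ω => Z ω = z) = 0 := by
        rw [hfW]
        exact sub_eq_zero_of_eq (hZ z hz)
      unfold cexp at h0 ⊢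
      rw [← htow z]
      exact h0
    have hν0 := hcomplete ν hzero
    obtain ⟨ω, hωu, hωp⟩ := pr_pos_elim p _ hu
    have hνu : ν u = 0 := by
      have := hν0 ω hωp
      rwa [hωu] at this
    rw [hν u hu] at hνu
    rw [hfW] at hνu
    linarith
  · intro hU z hz
    have hν0 : ∀ ω, p ω ≠ 0 → ν (U ω) = 0 := by
      intro ω hω
      have hpr : pr p (fun ω' => U ω' = U ω) ≠ 0 :=
        pr_ne_zero_of_p_ne_zero p hp _ ω rfl hω
      rw [hν _ hpr, hfW]
      have := hU (U ω) hpr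
      linarith
    have hnum : ∑ ω, (if Z ω = z then p ω * ν (U ω) else 0) = 0 := by
      apply Finset.sum_eq_zero
      intro ω _
      by_cases h1 : Z ω = z
      · by_cases h2 : p ω = 0
        · simp [h1, h2]
        · simp [h1, hν0 ω h2]
      · simp [h1]
    have h0 : cexp p (fun ω => f (W ω)) (fun ω => Z ω = z) = 0 := by
      unfold cexp
      rw [htow z, hnum, zero_div]
    rw [hfW] at h0
    linarith
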